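/- Let p ∈ ℂ[z_1,…,z_d] be a polynomial. Then ‖p(T)‖ ≤ 1 for every d-tuple T of pairwise commuting contractive bounded operators on a complex Hilbert space if and only if for every K ∈ ℕ and every simple K-nilpotent d-tuple T of contractive matrices, ‖p(T)‖ ≤ 1. -/

import Mathlib

open scoped ComplexConjugate ComplexOrder

/-- The operator (spectral) norm of a complex matrix, i.e. the norm of the induced
operator on Euclidean space. -/
noncomputable def matOpNorm {ι : Type*} [Fintype ι] (M : Matrix ι ι ℂ) : ℝ :=
  letI := Classical.decEq ι
  ‖Matrix.toEuclideanCLM (𝕜 := ℂ) M‖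

/-- Evaluation `p(T) = ∑_α p_α T^α` of a polynomial `p ∈ ℂ[z_1,…,z_d]` on a
`d`-tuple of elements of a `ℂ`-algebra, where `T^α = T_1^{α_1} ⋯ T_d^{α_d}`. -/
noncomputable def polyEval {d : ℕ} (p : MvPolynomial (Fin d) ℂ)
    {A : Type*} [Ring A] [Algebra ℂ A] (T : Fin d → A) : A :=
  ∑ α ∈ p.support, p.coeff α • (List.ofFn fun j => T j ^ α j).prod

/-- The `j`-th standard unit multi-index `e_j`. -/
def eVec {d : ℕ} (j : Fin d) : Fin d → ℕ := fun i => if i = j then 1 else 0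

/-- A simple `N`-nilpotent `d`-tuple: pairwise commuting `n × n` matrices together with a
spanning set `{b_α : |α| ≤ N}` of `ℂ^n` such that `T_j b_α = b_{α+e_j}` when `|α| ≤ N-1`
and `T_j b_α = 0` when `|α| = N`. -/
def IsSimpleNilTuple (d N n : ℕ) (T : Fin d → Matrix (Fin n) (Fin n) ℂ) : Prop :=
  (∀ i j, Commute (T i) (T j)) ∧
  ∃ b : (Fin d → ℕ) → (Fin n → ℂ),
    Submodule.span ℂ {v | ∃ α : Fin d → ℕ, (∑ i, α i) ≤ N ∧ v = b α} = ⊤ ∧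
    (∀ (j : Fin d) (α : Fin d → ℕ), (∑ i, α i) < N → (T j).mulVec (b α) = b (α + eVec j)) ∧
    (∀ (j : Fin d) (α : Fin d → ℕ), (∑ i, α i) = N → (T j).mulVec (b α) = 0)

/-! ### Auxiliary material -/

section MonomialProducts

/-- `T^α = T_1^{α_1} ⋯ T_d^{α_d}` as a list product, for a tuple in a monoid. -/
def PP {M : Type*} [Monoid M] {d : ℕ} (T : Fin d → M) (α : Fin d → ℕ) : M :=
  (List.ofFn fun j => T j ^ α j).prod

variable {M : Type*} [Monoid M] {d : ℕ}

lemma polyEval_eq_PP {d : ℕ} (p : MvPolynomial (Fin d) ℂ)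
    {A : Type*} [Ring A] [Algebra ℂ A] (T : Fin d → A) :
    polyEval p T = ∑ α ∈ p.support, p.coeff α • PP T (⇑α) := rfl

lemma PP_zero (T : Fin d → M) : PP T 0 = 1 := by
  simp [PP]

lemma PP_succ (T : Fin (d+1) → M) (α : Fin (d+1) → ℕ) :
    PP T α = T 0 ^ α 0 * PP (fun i : Fin d => T i.succ) (fun i => α i.succ) := by
  simp [PP, List.ofFn_succ]

lemma Commute_PP {T : Fin d → M} (a : M) (h : ∀ i, Commute a (T i)) (α : Fin d → ℕ) :
    Commute a (PP T α) := by
  apply Commute.list_prod_right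
  intro x hx
  obtain ⟨i, rfl⟩ := List.mem_ofFn.1 hx
  exact (h i).pow_right _

lemma PP_add {T : Fin d → M} (hc : ∀ i j, Commute (T i) (T j)) (α β : Fin d → ℕ) :
    PP T (α + β) = PP T α * PP T β := by
  induction d with
  | zero => simp [PP]
  | succ d ih =>
    rw [PP_succ, PP_succ, PP_succ]
    have hc' : ∀ i j : Fin d, Commute (T i.succ) (T j.succ) := fun i j => hc _ _
    rw [show (fun i : Fin d => (α + β) i.succ) = (fun i => α i.succ) + (fun i => β i.succ) from rfl]
    rw [ih hc']
    have h1 : Commute (T 0 ^ β 0) (PP (fun i : Fin d => T i.succ) fun i => α i.succ) :=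
      Commute_PP _ (fun i => ((hc 0 i.succ).pow_left _)) _
    have : (α + β) 0 = α 0 + β 0 := rfl
    rw [this, pow_add, mul_assoc, mul_assoc]
    congr 1
    rw [← mul_assoc, ← mul_assoc, h1.eq]

lemma PP_eVec (T : Fin d → M) (j : Fin d) : PP T (eVec j) = T j := by
  induction d with
  | zero => exact j.elim0
  | succ d ih =>
    rw [PP_succ]
    rcases Fin.eq_zero_or_eq_succ j with rfl | ⟨j', rfl⟩
    · have : (fun i : Fin d => eVec (0 : Fin (d+1)) i.succ) = 0 := by
        funext i; simp [eVec, Fin.succ_ne_zero]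
      rw [this, PP_zero, mul_one]
      simp [eVec]
    · have : (fun i : Fin d => eVec j'.succ i.succ) = eVec j' := by
        funext i; simp [eVec, Fin.succ_inj]
      rw [this, ih]
      simp [eVec, (Fin.succ_ne_zero j').symm, Ne.symm (Fin.succ_ne_zero j')]

lemma PP_add_eVec {T : Fin d → M} (hc : ∀ i j, Commute (T i) (T j)) (α : Fin d → ℕ) (j : Fin d) :
    PP T (α + eVec j) = PP T α * T j := by
  rw [PP_add hc, PP_eVec]

lemma PP_eVec_add {T : Fin d → M} (hc : ∀ i j, Commute (T i) (T j)) (α : Fin d → ℕ) (j : Fin d) :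
    PP T (α + eVec j) = T j * PP T α := by
  rw [show α + eVec j = eVec j + α from add_comm _ _, PP_add hc, PP_eVec]

lemma sum_eVec {d : ℕ} (j : Fin d) : (∑ i, eVec j i) = 1 := by
  simp [eVec]

/-- Peeling: if `α j ≠ 0` then `PP T α = PP T (α - eVec j) * T j`. -/
lemma PP_peel {T : Fin d → M} (hc : ∀ i j, Commute (T i) (T j)) {α : Fin d → ℕ} {j : Fin d}
    (h : α j ≠ 0) : PP T α = PP T (α - eVec j) * T j := by
  have : α = (α - eVec j) + eVec j := by
    funext i
    by_cases hij : i = j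
    · subst hij
      simp only [Pi.add_apply, Pi.sub_apply, eVec, if_true, eq_self_iff_true]; omega
    · simp [eVec, hij]
  conv_lhs => rw [this]
  rw [PP_add_eVec hc]

lemma sub_add_eVec {d : ℕ} {α : Fin d → ℕ} {j : Fin d} (h : α j ≠ 0) :
    (α - eVec j) + eVec j = α := by
  funext i
  by_cases hij : i = j
  · subst hij
    simp only [Pi.add_apply, Pi.sub_apply, eVec, if_true, eq_self_iff_true]; omega
  · simp [eVec, hij]

lemma sum_sub_eVec {d : ℕ} {α : Fin d → ℕ} {j : Fin d} (h : α j ≠ 0) :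
    (∑ i, (α - eVec j) i) + 1 = ∑ i, α i := by
  have h2 : ∑ i, (α - eVec j + eVec j) i = (∑ i, (α - eVec j) i) + ∑ i, eVec j i := by
    simp [Finset.sum_add_distrib]
  conv_rhs => rw [← sub_add_eVec h]
  rw [h2, sum_eVec]

lemma exists_ne_zero {d : ℕ} {α : Fin d → ℕ} (h : (∑ i, α i) ≠ 0) : ∃ j, α j ≠ 0 := by
  by_contra hc
  push_neg at hc
  exact h (by simp [hc])

end MonomialProducts

section MapLemmas

/-- `polyEval` commutes with (non-unital) algebra equivalences. -/
lemma polyEval_map {d : ℕ} (p : MvPolynomial (Fin d) ℂ)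
    {A B F : Type*} [Ring A] [Algebra ℂ A] [Ring B] [Algebra ℂ B]
    [EquivLike F A B] [NonUnitalAlgEquivClass F ℂ A B] (f : F) (T : Fin d → A) :
    polyEval p (fun j => f (T j)) = f (polyEval p T) := by
  simp [polyEval, map_sum, map_smul, map_list_prod, List.map_ofFn, Function.comp_def, map_pow]

variable {V W : Type*} [NormedAddCommGroup V] [NormedSpace ℂ V]
  [NormedAddCommGroup W] [NormedSpace ℂ W]

lemma cA_aux1 (e : V ≃ₗᵢ[ℂ] W) (x : W) : e.toContinuousLinearEquiv.symm x = e.symm x := rfl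
lemma cA_aux2 (e : V ≃ₗᵢ[ℂ] W) (x : V) : e.toContinuousLinearEquiv x = e x := rfl

/-- Conjugation of continuous endomorphisms by a linear isometry equivalence,
as an algebra equivalence. -/
noncomputable def conjAlg (e : V ≃ₗᵢ[ℂ] W) : (V →L[ℂ] V) ≃ₐ[ℂ] (W →L[ℂ] W) where
  toFun A := (e.toContinuousLinearEquiv : V →L[ℂ] W) ∘L A ∘L
      (e.toContinuousLinearEquiv.symm : W →L[ℂ] V)
  invFun B := (e.toContinuousLinearEquiv.symm : W →L[ℂ] V) ∘L B ∘L
      (e.toContinuousLinearEquiv : V →L[ℂ] W)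
  left_inv A := by ext x; simp [cA_aux1, cA_aux2]
  right_inv B := by ext x; simp [cA_aux1, cA_aux2]
  map_add' A B := by ext x; simp
  map_mul' A B := by ext x; simp [cA_aux1, cA_aux2]
  commutes' r := by ext x; simp [Algebra.algebraMap_eq_smul_one, cA_aux1, cA_aux2]

lemma conjAlg_apply (e : V ≃ₗᵢ[ℂ] W) (A : V →L[ℂ] V) (x : W) :
    conjAlg e A x = e (A (e.symm x)) := rfl

lemma conjAlg_norm_le (e : V ≃ₗᵢ[ℂ] W) (A : V →L[ℂ] V) : ‖conjAlg e A‖ ≤ ‖A‖ := by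
  refine ContinuousLinearMap.opNorm_le_bound _ (norm_nonneg A) fun x => ?_
  rw [conjAlg_apply, e.norm_map]
  calc ‖A (e.symm x)‖ ≤ ‖A‖ * ‖e.symm x‖ := A.le_opNorm _
  _ = ‖A‖ * ‖x‖ := by rw [e.symm.norm_map]

lemma conjAlg_symm_conj (e : V ≃ₗᵢ[ℂ] W) (A : V →L[ℂ] V) :
    conjAlg e.symm (conjAlg e A) = A := by
  ext x; simp [conjAlg_apply]

lemma conjAlg_norm (e : V ≃ₗᵢ[ℂ] W) (A : V →L[ℂ] V) : ‖conjAlg e A‖ = ‖A‖ := by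
  refine le_antisymm (conjAlg_norm_le e A) ?_
  conv_lhs => rw [← conjAlg_symm_conj e A]
  exact conjAlg_norm_le e.symm _

lemma matOpNorm_eq {n : ℕ} (M : Matrix (Fin n) (Fin n) ℂ) :
    matOpNorm M = ‖Matrix.toEuclideanCLM (𝕜 := ℂ) M‖ := by
  have h : Classical.decEq (Fin n) = instDecidableEqFin n := Subsingleton.elim _ _
  unfold matOpNorm
  rw [h]

end MapLemmas

section ApplyLemmas

variable {d : ℕ} {G : Type*} [NormedAddCommGroup G] [NormedSpace ℂ G]

lemma PP_apply_shift (S : Fin d → G →L[ℂ] G) (hc : ∀ i j, Commute (S i) (S j))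
    (B : (Fin d → ℕ) → G) (hB : ∀ j β, S j (B β) = B (β + eVec j)) :
    ∀ α β, PP S α (B β) = B (β + α) := by
  suffices h : ∀ (n : ℕ) (α : Fin d → ℕ), (∑ i, α i) = n → ∀ β, PP S α (B β) = B (β + α) by
    intro α β; exact h _ α rfl β
  intro n
  induction n with
  | zero =>
    intro α hα β
    have : α = 0 := by
      funext i
      have := (Finset.sum_eq_zero_iff.1 hα) i (Finset.mem_univ i)
      simpa using this
    subst this
    rw [PP_zero, ContinuousLinearMap.one_apply, add_zero]
  | succ n ih =>
    intro α hα β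
    obtain ⟨j, hj⟩ := exists_ne_zero (by omega : (∑ i, α i) ≠ 0)
    rw [PP_peel hc hj, ContinuousLinearMap.mul_apply, hB,
      ih _ (by have := sum_sub_eVec (α := α) hj; omega)]
    congr 1
    rw [add_assoc, add_comm (eVec j), sub_add_eVec hj]

variable {V : Type*} [NormedAddCommGroup V] [NormedSpace ℂ V]

lemma PP_intertwine (ι : V →ₗ[ℂ] G) (R : Fin d → V →L[ℂ] V) (S : Fin d → G →L[ℂ] G)
    (hcR : ∀ i j, Commute (R i) (R j)) (hcS : ∀ i j, Commute (S i) (S j))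
    (h : ∀ j v, ι (R j v) = S j (ι v)) :
    ∀ α v, ι (PP R α v) = PP S α (ι v) := by
  suffices hh : ∀ (n : ℕ) (α : Fin d → ℕ), (∑ i, α i) = n → ∀ v, ι (PP R α v) = PP S α (ι v) by
    intro α v; exact hh _ α rfl v
  intro n
  induction n with
  | zero =>
    intro α hα v
    have : α = 0 := by
      funext i
      have := (Finset.sum_eq_zero_iff.1 hα) i (Finset.mem_univ i)
      simpa using this
    subst this
    rw [PP_zero, PP_zero, ContinuousLinearMap.one_apply, ContinuousLinearMap.one_apply]
  | succ n ih =>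
    intro α hα v
    obtain ⟨j, hj⟩ := exists_ne_zero (by omega : (∑ i, α i) ≠ 0)
    rw [PP_peel hcR hj, PP_peel hcS hj, ContinuousLinearMap.mul_apply,
      ContinuousLinearMap.mul_apply,
      ih _ (by have := sum_sub_eVec (α := α) hj; omega), h]

lemma pow_apply_norm_le {A : G →L[ℂ] G} (h : ‖A‖ ≤ 1) (n : ℕ) (x : G) :
    ‖(A ^ n) x‖ ≤ ‖x‖ := by
  induction n generalizing x with
  | zero => simp
  | succ n ih =>
    rw [pow_succ, ContinuousLinearMap.mul_apply]
    calc ‖(A ^ n) (A x)‖ ≤ ‖A x‖ := ih _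
    _ ≤ ‖A‖ * ‖x‖ := A.le_opNorm x
    _ ≤ 1 * ‖x‖ := by gcongr
    _ = ‖x‖ := one_mul _

lemma PP_apply_norm_le {T : Fin d → G →L[ℂ] G} (hT : ∀ j, ‖T j‖ ≤ 1)
    (α : Fin d → ℕ) (x : G) : ‖PP T α x‖ ≤ ‖x‖ := by
  induction d with
  | zero => simp [PP]
  | succ d ih =>
    have : PP T α = T 0 ^ α 0 * PP (fun i : Fin d => T i.succ) (fun i => α i.succ) := by
      simp [PP, List.ofFn_succ]
    rw [this, ContinuousLinearMap.mul_apply]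
    calc ‖(T 0 ^ α 0) (PP (fun i : Fin d => T i.succ) (fun i => α i.succ) x)‖
        ≤ ‖PP (fun i : Fin d => T i.succ) (fun i => α i.succ) x‖ :=
          pow_apply_norm_le (hT 0) _ _
    _ ≤ ‖x‖ := ih (fun j => hT j.succ) _

end ApplyLemmas

/-- `H^N` with the `ℓ²` norm. -/
abbrev GG (N : ℕ) (H : Type*) [NormedAddCommGroup H] : Type _ := PiLp 2 (fun _ : Fin N => H)

section shift
variable {H : Type*} [NormedAddCommGroup H] [InnerProductSpace ℂ H]
variable {d : ℕ} {N : ℕ}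

/-- The shift `(ξ_0, …, ξ_{N-1}) ↦ (0, A ξ_0, …, A ξ_{N-2})` as a linear map. -/
def shiftLin (A : H →L[ℂ] H) : GG N H →ₗ[ℂ] GG N H where
  toFun ξ := WithLp.toLp 2 fun k : Fin N => if h : (k : ℕ) = 0 then 0 else A (ξ ⟨(k : ℕ) - 1, by omega⟩)
  map_add' ξ η := by
    ext k
    by_cases h : (k : ℕ) = 0 <;> simp [h, PiLp.add_apply]
  map_smul' c ξ := by
    ext k
    by_cases h : (k : ℕ) = 0 <;> simp [h, PiLp.smul_apply]

lemma shiftLin_apply (A : H →L[ℂ] H) (ξ : GG N H) (k : Fin N) :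
    shiftLin A ξ k = if h : (k : ℕ) = 0 then 0 else A (ξ ⟨(k : ℕ) - 1, by omega⟩) := rfl

lemma shiftLin_norm_le {A : H →L[ℂ] H} (hA : ‖A‖ ≤ 1) (ξ : GG N H) :
    ‖shiftLin A ξ‖ ≤ 1 * ‖ξ‖ := by
  rw [one_mul, PiLp.norm_eq_of_L2, PiLp.norm_eq_of_L2]
  apply Real.sqrt_le_sqrt
  have key : ∑ k : Fin N, ‖shiftLin A ξ k‖ ^ 2
      = ∑ k ∈ Finset.univ.filter (fun k : Fin N => (k : ℕ) ≠ 0),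
          ‖A (ξ ⟨(k : ℕ) - 1, by omega⟩)‖ ^ 2 := by
    rw [Finset.sum_filter]
    apply Finset.sum_congr rfl
    intro k _
    rw [shiftLin_apply]
    by_cases h : (k : ℕ) = 0 <;> simp [h]
  rw [key]
  have step1 : ∑ k ∈ Finset.univ.filter (fun k : Fin N => (k : ℕ) ≠ 0),
      ‖A (ξ ⟨(k : ℕ) - 1, by omega⟩)‖ ^ 2
      ≤ ∑ k ∈ Finset.univ.filter (fun k : Fin N => (k : ℕ) ≠ 0),
        ‖ξ ⟨(k : ℕ) - 1, by omega⟩‖ ^ 2 := by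
    apply Finset.sum_le_sum
    intro k _
    have : ‖A (ξ ⟨(k : ℕ) - 1, by omega⟩)‖ ≤ ‖ξ ⟨(k : ℕ) - 1, by omega⟩‖ := by
      calc ‖A (ξ ⟨(k : ℕ) - 1, by omega⟩)‖ ≤ ‖A‖ * ‖ξ ⟨(k : ℕ) - 1, by omega⟩‖ := A.le_opNorm _
      _ ≤ 1 * _ := by gcongr
      _ = _ := one_mul _
    exact pow_le_pow_left₀ (norm_nonneg _) this 2
  refine step1.trans ?_
  have step2 : ∑ k ∈ Finset.univ.filter (fun k : Fin N => (k : ℕ) ≠ 0),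
      ‖ξ ⟨(k : ℕ) - 1, by omega⟩‖ ^ 2
      = ∑ m ∈ (Finset.univ.filter (fun k : Fin N => (k : ℕ) ≠ 0)).image
          (fun k : Fin N => (⟨(k : ℕ) - 1, by omega⟩ : Fin N)), ‖ξ m‖ ^ 2 := by
    rw [Finset.sum_image]
    intro a ha b hb hab
    simp only [Finset.coe_filter, Finset.mem_univ, true_and, Set.mem_setOf_eq, Finset.mem_filter] at ha hb
    apply Fin.ext
    have h2 : ((a : ℕ) - 1) = ((b : ℕ) - 1) := by
      simpa using congrArg Fin.val hab
    omega
  rw [step2]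
  apply Finset.sum_le_sum_of_subset_of_nonneg (Finset.subset_univ _)
  intro i _ _
  positivity

/-- The shift as a continuous linear map (given that `A` is a contraction). -/
noncomputable def shiftCLM (A : H →L[ℂ] H) (hA : ‖A‖ ≤ 1) : GG N H →L[ℂ] GG N H :=
  LinearMap.mkContinuous (shiftLin A) 1 (shiftLin_norm_le hA)

lemma shiftCLM_apply (A : H →L[ℂ] H) (hA : ‖A‖ ≤ 1) (ξ : GG N H) (k : Fin N) :
    shiftCLM A hA ξ k = if h : (k : ℕ) = 0 then 0 else A (ξ ⟨(k : ℕ) - 1, by omega⟩) := rfl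

lemma shiftCLM_norm_le (A : H →L[ℂ] H) (hA : ‖A‖ ≤ 1) :
    ‖(shiftCLM (N := N) A hA)‖ ≤ 1 :=
  LinearMap.mkContinuous_norm_le _ zero_le_one _

lemma shiftCLM_comm {A B : H →L[ℂ] H} (hA : ‖A‖ ≤ 1) (hB : ‖B‖ ≤ 1)
    (hAB : Commute A B) : Commute (shiftCLM (N := N) A hA) (shiftCLM B hB) := by
  apply ContinuousLinearMap.ext
  intro ξ
  ext k
  by_cases h0 : (k : ℕ) = 0
  · simp [ContinuousLinearMap.mul_apply, shiftCLM_apply, h0]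
  · by_cases h1 : (k : ℕ) - 1 = 0
    · simp [ContinuousLinearMap.mul_apply, shiftCLM_apply, h0, h1]
    · simp only [ContinuousLinearMap.mul_apply, shiftCLM_apply, Fin.val_mk,
        dif_neg h0, dif_neg h1]
      have := ContinuousLinearMap.ext_iff.1 hAB.eq (ξ ⟨(k : ℕ) - 1 - 1, by omega⟩)
      rw [ContinuousLinearMap.mul_apply, ContinuousLinearMap.mul_apply] at this
      exact this

end shift

section window
variable {H : Type*} [NormedAddCommGroup H] [InnerProductSpace ℂ H]
variable {N L : ℕ}

/-- The "window" map `v ↦ (0,…,0,v,…,v,0,…)` with `v` in positions `[m, m+L)`. -/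
def windL (N L : ℕ) (m : ℕ) : H →ₗ[ℂ] GG N H where
  toFun v := WithLp.toLp 2 fun k : Fin N => if m ≤ (k : ℕ) ∧ (k : ℕ) < m + L then v else 0
  map_add' v w := by
    ext k
    by_cases h : m ≤ (k : ℕ) ∧ (k : ℕ) < m + L <;> simp [h, PiLp.add_apply]
  map_smul' c v := by
    ext k
    by_cases h : m ≤ (k : ℕ) ∧ (k : ℕ) < m + L <;> simp [h, PiLp.smul_apply]

lemma windL_apply (m : ℕ) (v : H) (k : Fin N) :
    windL N L m v k = if m ≤ (k : ℕ) ∧ (k : ℕ) < m + L then v else 0 := rfl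

lemma windL_norm (m : ℕ) (hm : m + L ≤ N) (v : H) :
    ‖windL N L m v‖ = Real.sqrt L * ‖v‖ := by
  rw [PiLp.norm_eq_of_L2]
  have h1 : ∑ k : Fin N, ‖windL N L m v k‖ ^ 2
      = ∑ i ∈ Finset.range N, if i ∈ Finset.Ico m (m + L) then ‖v‖ ^ 2 else 0 := by
    rw [← Fin.sum_univ_eq_sum_range (fun i => if i ∈ Finset.Ico m (m + L) then ‖v‖ ^ 2 else 0)]
    apply Finset.sum_congr rfl
    intro k _
    rw [windL_apply]
    by_cases h : m ≤ (k : ℕ) ∧ (k : ℕ) < m + L <;> simp [h, Finset.mem_Ico]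
  have hsub : Finset.Ico m (m + L) ⊆ Finset.range N := by
    intro i hi
    rw [Finset.mem_Ico] at hi
    rw [Finset.mem_range]
    omega
  rw [h1, Finset.sum_ite_mem, Finset.inter_eq_right.2 hsub, Finset.sum_const, Nat.card_Ico,
    nsmul_eq_mul]
  have h2 : m + L - m = L := by omega
  rw [h2, Real.sqrt_mul (by positivity), Real.sqrt_sq (norm_nonneg v)]

lemma windL_zero_of_le (m : ℕ) (hm : N ≤ m) (v : H) : windL N L m v = 0 := by
  ext k
  rw [windL_apply, if_neg (by omega)]
  rfl

lemma windL_diff_norm (a : ℕ) (v : H) :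
    ‖windL N L a v - windL N L 0 v‖ ≤ Real.sqrt (2 * (a : ℝ)) * ‖v‖ := by
  rw [PiLp.norm_eq_of_L2]
  set U : Finset ℕ := Finset.Ico 0 a ∪ Finset.Ico L (L + a) with hU
  have hterm : ∀ k : Fin N, ‖(windL N L a v - windL N L 0 v) k‖ ^ 2
      ≤ if (k : ℕ) ∈ U then ‖v‖ ^ 2 else 0 := by
    intro k
    rw [PiLp.sub_apply, windL_apply, windL_apply]
    have hmem : ((k : ℕ) ∈ U) ↔ ((k : ℕ) < a ∨ (L ≤ (k : ℕ) ∧ (k : ℕ) < L + a)) := by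
      simp [hU, Finset.mem_union, Finset.mem_Ico]
    by_cases h1 : a ≤ (k : ℕ) ∧ (k : ℕ) < a + L
    · by_cases h2 : 0 ≤ (k : ℕ) ∧ (k : ℕ) < 0 + L
      · rw [if_pos h1, if_pos h2, sub_self, show ‖(0:H)‖ ^ 2 = (0:ℝ) by simp]
        split_ifs <;> positivity
      · rw [if_pos h1, if_neg h2, sub_zero, if_pos (hmem.2 (by omega))]
    · by_cases h2 : 0 ≤ (k : ℕ) ∧ (k : ℕ) < 0 + L
      · rw [if_neg h1, if_pos h2, zero_sub, norm_neg, if_pos (hmem.2 (by omega))]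
      · rw [if_neg h1, if_neg h2, sub_self, show ‖(0:H)‖ ^ 2 = (0:ℝ) by simp]
        split_ifs <;> positivity
  have hsum : ∑ k : Fin N, ‖(windL N L a v - windL N L 0 v) k‖ ^ 2
      ≤ (2 * (a : ℝ)) * ‖v‖ ^ 2 := by
    calc ∑ k : Fin N, ‖(windL N L a v - windL N L 0 v) k‖ ^ 2
        ≤ ∑ k : Fin N, if (k : ℕ) ∈ U then ‖v‖ ^ 2 else 0 :=
          Finset.sum_le_sum fun k _ => hterm k
    _ = ∑ i ∈ Finset.range N, if i ∈ U then ‖v‖ ^ 2 else 0 :=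
          Fin.sum_univ_eq_sum_range (fun i => if i ∈ U then ‖v‖ ^ 2 else 0) N
    _ = ((Finset.range N ∩ U).card : ℝ) * ‖v‖ ^ 2 := by
          rw [Finset.sum_ite_mem, Finset.sum_const, nsmul_eq_mul]
    _ ≤ (2 * (a : ℝ)) * ‖v‖ ^ 2 := by
          have hc : (Finset.range N ∩ U).card ≤ 2 * a := by
            refine le_trans (Finset.card_le_card Finset.inter_subset_right) ?_
            refine le_trans (Finset.card_union_le _ _) ?_
            simp [Nat.card_Ico]
            omega
          refine mul_le_mul_of_nonneg_right ?_ (by positivity)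
          exact_mod_cast hc
  calc Real.sqrt (∑ k : Fin N, ‖(windL N L a v - windL N L 0 v) k‖ ^ 2)
      ≤ Real.sqrt ((2 * (a : ℝ)) * ‖v‖ ^ 2) := Real.sqrt_le_sqrt hsum
  _ = Real.sqrt (2 * (a : ℝ)) * ‖v‖ := by
      rw [Real.sqrt_mul (by positivity), Real.sqrt_sq (norm_nonneg v)]

end window


/-- `polyEval` commutes with algebra homomorphisms. -/
lemma polyEval_map_alg {d : ℕ} (p : MvPolynomial (Fin d) ℂ)
    {A B F : Type*} [Ring A] [Algebra ℂ A] [Ring B] [Algebra ℂ B]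
    [FunLike F A B] [AlgHomClass F ℂ A B] (f : F) (T : Fin d → A) :
    polyEval p (fun j => f (T j)) = f (polyEval p T) := by
  simp [polyEval, map_sum, map_smul, map_list_prod, List.map_ofFn, Function.comp_def, map_pow]

section ShiftWind
variable {H : Type*} [NormedAddCommGroup H] [InnerProductSpace ℂ H] {d N L : ℕ}

lemma shift_wind (T : Fin d → H →L[ℂ] H) (hcomm : ∀ i j, Commute (T i) (T j))
    (hT : ∀ j, ‖T j‖ ≤ 1) (x : H) (j : Fin d) (α : Fin d → ℕ) :
    shiftCLM (N := N) (T j) (hT j) (windL N L (∑ i, α i) (PP T α x)) =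
      windL N L (∑ i, (α + eVec j) i) (PP T (α + eVec j) x) := by
  have hsae : (∑ i, (α + eVec j) i) = (∑ i, α i) + 1 := by
    simp [Finset.sum_add_distrib, sum_eVec]
  have hPP : PP T (α + eVec j) x = T j (PP T α x) := by
    rw [PP_eVec_add hcomm, ContinuousLinearMap.mul_apply]
  ext k
  rw [shiftCLM_apply, hsae]
  by_cases h0 : (k : ℕ) = 0
  · rw [dif_pos h0, windL_apply, if_neg (by omega)]
  · rw [dif_neg h0, windL_apply, windL_apply, apply_ite (T j), map_zero, hPP, Fin.val_mk]
    by_cases h1 : (∑ i, α i) ≤ (k : ℕ) - 1 ∧ (k : ℕ) - 1 < (∑ i, α i) + L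
    · rw [if_pos h1, if_pos (by omega)]
    · rw [if_neg h1, if_neg (by omega)]

set_option maxHeartbeats 2000000 in
set_option synthInstance.maxHeartbeats 1000000 in
/-- The key estimate for the backward direction. -/
lemma backward_main {d : ℕ} (p : MvPolynomial (Fin d) ℂ)
    (hM : ∀ (K n : ℕ) (M : Fin d → Matrix (Fin n) (Fin n) ℂ),
        IsSimpleNilTuple d K n M → (∀ j, matOpNorm (M j) ≤ 1) → matOpNorm (polyEval p M) ≤ 1)
    (T : Fin d → H →L[ℂ] H) (hcomm : ∀ i j, Commute (T i) (T j)) (hT : ∀ j, ‖T j‖ ≤ 1)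
    (L : ℕ) (hL : 1 ≤ L) (x : H) :
    Real.sqrt L * ‖polyEval p T x‖ ≤ Real.sqrt L * ‖x‖ +
      (∑ α ∈ p.support, ‖p.coeff α‖) * (Real.sqrt (2 * (p.totalDegree : ℝ)) * ‖x‖) := by
  classical
  set D := p.totalDegree with hD
  set N := L + D with hNdef
  have hLN : 0 + L ≤ N := by omega
  -- the tuple of shifts on `GG N H`
  set S : Fin d → (GG N H →L[ℂ] GG N H) := fun j => shiftCLM (T j) (hT j) with hS
  have hcS : ∀ i j, Commute (S i) (S j) := fun i j => shiftCLM_comm _ _ (hcomm i j)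
  -- the vectors b_α
  set f : (Fin d → ℕ) → GG N H := fun α => windL N L (∑ i, α i) (PP T α x) with hf
  have hshift : ∀ (j : Fin d) (α : Fin d → ℕ), S j (f α) = f (α + eVec j) :=
    fun j α => shift_wind T hcomm hT x j α
  have hfzero : ∀ α : Fin d → ℕ, N ≤ (∑ i, α i) → f α = 0 :=
    fun α hα => windL_zero_of_le _ hα _
  -- the span
  set setW : Set (GG N H) := {v | ∃ α : Fin d → ℕ, (∑ i, α i) ≤ N ∧ v = f α} with hsetW
  set Wsp : Submodule ℂ (GG N H) := Submodule.span ℂ setW with hWsp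
  have bmem : ∀ α : Fin d → ℕ, f α ∈ Wsp := by
    intro α
    by_cases h : (∑ i, α i) ≤ N
    · exact Submodule.subset_span ⟨α, h, rfl⟩
    · rw [hfzero α (by omega)]
      exact Wsp.zero_mem
  have hfin : setW.Finite := by
    have hsub : setW ⊆ f '' (Set.pi Set.univ fun _ : Fin d => Set.Iic N) := by
      rintro v ⟨α, hα, rfl⟩
      refine ⟨α, ?_, rfl⟩
      intro i _
      refine Set.mem_Iic.2 (le_trans ?_ hα)
      exact Finset.single_le_sum (fun i _ => Nat.zero_le (α i)) (Finset.mem_univ i)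
    exact Set.Finite.subset (Set.Finite.image f (Set.Finite.pi fun i => Set.finite_Iic N)) hsub
  haveI : FiniteDimensional ℂ Wsp := FiniteDimensional.span_of_finite ℂ hfin
  -- restriction of the shifts to Wsp
  have hWinv : ∀ (j : Fin d) (w : GG N H), w ∈ Wsp → S j w ∈ Wsp := by
    intro j w hw
    have hmap : Submodule.map ((S j) : GG N H →ₗ[ℂ] GG N H) Wsp ≤ Wsp := by
      rw [hWsp, Submodule.map_span]
      refine Submodule.span_le.2 ?_
      rintro v ⟨u, ⟨α, hα, rfl⟩, rfl⟩
      simp only [ContinuousLinearMap.coe_coe]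
      rw [hshift j α]
      exact bmem _
    exact hmap ⟨w, hw, rfl⟩
  set R : Fin d → (Wsp →L[ℂ] Wsp) := fun j =>
    LinearMap.toContinuousLinearMap
      (((S j) : GG N H →ₗ[ℂ] GG N H).restrict (fun w hw => hWinv j w hw)) with hR'
  have hR : ∀ (j : Fin d) (w : Wsp), (R j w : GG N H) = S j (w : GG N H) := by
    intro j w
    simp [hR', LinearMap.restrict_apply]
  have hRnorm : ∀ j, ‖R j‖ ≤ 1 := by
    intro j
    refine ContinuousLinearMap.opNorm_le_bound _ zero_le_one fun w => ?_
    rw [one_mul]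
    have h1 : ‖R j w‖ = ‖(R j w : GG N H)‖ := rfl
    have h2 : ‖w‖ = ‖(w : GG N H)‖ := rfl
    rw [h1, h2, hR j w]
    calc ‖S j (w : GG N H)‖ ≤ ‖S j‖ * ‖(w : GG N H)‖ := (S j).le_opNorm _
    _ ≤ 1 * ‖(w : GG N H)‖ :=
        mul_le_mul_of_nonneg_right (shiftCLM_norm_le _ _) (norm_nonneg _)
    _ = ‖(w : GG N H)‖ := one_mul _
  have hcR : ∀ i j, Commute (R i) (R j) := by
    intro i j
    apply ContinuousLinearMap.ext
    intro w
    apply Subtype.ext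
    have e1 : ((R i * R j) w : GG N H) = S i (S j (w : GG N H)) := by
      rw [ContinuousLinearMap.mul_apply, hR, hR]
    have e2 : ((R j * R i) w : GG N H) = S j (S i (w : GG N H)) := by
      rw [ContinuousLinearMap.mul_apply, hR, hR]
    rw [e1, e2, ← ContinuousLinearMap.mul_apply, ← ContinuousLinearMap.mul_apply,
      (hcS i j).eq]
  -- move to Euclidean space
  set n := Module.finrank ℂ Wsp with hn
  set e : Wsp ≃ₗᵢ[ℂ] EuclideanSpace ℂ (Fin n) := (stdOrthonormalBasis ℂ Wsp).repr with he
  set Mt : Fin d → Matrix (Fin n) (Fin n) ℂ :=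
    fun j => (Matrix.toEuclideanCLM (𝕜 := ℂ)).symm (conjAlg e (R j)) with hMt'
  have hMt : ∀ j, Matrix.toEuclideanCLM (𝕜 := ℂ) (Mt j) = conjAlg e (R j) := by
    intro j
    rw [hMt']
    exact StarAlgEquiv.apply_symm_apply _ _
  have hMnorm : ∀ j, matOpNorm (Mt j) ≤ 1 := by
    intro j
    rw [matOpNorm_eq, hMt, conjAlg_norm]
    exact hRnorm j
  have hmv : ∀ (Q : Matrix (Fin n) (Fin n) ℂ) (v : EuclideanSpace ℂ (Fin n)),
      Q.mulVec (WithLp.ofLp v) = WithLp.ofLp (Matrix.toEuclideanCLM (𝕜 := ℂ) Q v) := by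
    intro Q v
    have h1 := Matrix.ofLp_toEuclideanCLM (𝕜 := ℂ) Q v
    exact h1.symm
  set b' : (Fin d → ℕ) → EuclideanSpace ℂ (Fin n) :=
    fun α => e ⟨f α, bmem α⟩ with hb'
  have hb'shift : ∀ (j : Fin d) (α : Fin d → ℕ),
      Matrix.toEuclideanCLM (𝕜 := ℂ) (Mt j) (b' α) = e ⟨f (α + eVec j), bmem _⟩ := by
    intro j α
    rw [hMt, hb', conjAlg_apply, e.symm_apply_apply]
    congr 1
    apply Subtype.ext
    rw [hR]
    exact hshift j α
  have hNil : IsSimpleNilTuple d N n Mt := by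
    refine ⟨fun i j => ((hcR i j).map (conjAlg e)).map
      ((Matrix.toEuclideanCLM (𝕜 := ℂ)).symm), fun α => WithLp.ofLp (b' α), ?_, ?_, ?_⟩
    · -- span condition
      have hspanW : Submodule.span ℂ
          {w : Wsp | ∃ α : Fin d → ℕ, (∑ i, α i) ≤ N ∧ w = ⟨f α, bmem α⟩} = ⊤ := by
        apply Submodule.map_injective_of_injective (Submodule.injective_subtype Wsp)
        rw [Submodule.map_span, Submodule.map_subtype_top]
        have himg : (Wsp.subtype '' {w : Wsp | ∃ α : Fin d → ℕ,
            (∑ i, α i) ≤ N ∧ w = ⟨f α, bmem α⟩}) = setW := by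
          ext v
          constructor
          · rintro ⟨w, ⟨α, hα, rfl⟩, rfl⟩
            exact ⟨α, hα, rfl⟩
          · rintro ⟨α, hα, rfl⟩
            exact ⟨⟨f α, bmem α⟩, ⟨α, hα, rfl⟩, rfl⟩
        rw [himg, hWsp]
      have hset : {v : Fin n → ℂ | ∃ α : Fin d → ℕ, (∑ i, α i) ≤ N ∧ v = WithLp.ofLp (b' α)}
          = ⇑(e.toLinearEquiv.trans (WithLp.linearEquiv 2 ℂ (Fin n → ℂ))) ''
            {w : Wsp | ∃ α : Fin d → ℕ, (∑ i, α i) ≤ N ∧ w = ⟨f α, bmem α⟩} := by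
        ext v
        constructor
        · rintro ⟨α, hα, rfl⟩
          exact ⟨⟨f α, bmem α⟩, ⟨α, hα, rfl⟩, rfl⟩
        · rintro ⟨w, ⟨α, hα, rfl⟩, rfl⟩
          exact ⟨α, hα, rfl⟩
      rw [hset, ← LinearEquiv.coe_coe, ← Submodule.map_span, hspanW, Submodule.map_top]
      exact LinearEquiv.range _
    · -- shift condition
      intro j α hlt
      rw [hmv, hb'shift j α]
    · -- annihilation condition
      intro j α heq
      rw [hmv, hb'shift j α]
      have : (⟨f (α + eVec j), bmem _⟩ : Wsp) = 0 := by
        apply Subtype.ext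
        have : f (α + eVec j) = 0 := by
          apply hfzero
          have : (∑ i, (α + eVec j) i) = (∑ i, α i) + 1 := by
            simp [Finset.sum_add_distrib, sum_eVec]
          omega
        simpa using this
      rw [this, map_zero, WithLp.ofLp_zero]
  have hMle : matOpNorm (polyEval p Mt) ≤ 1 := hM N n Mt hNil hMnorm
  -- norm of the compressed polynomial
  have hRle : ‖polyEval p R‖ ≤ 1 := by
    have h1 : polyEval p (fun j => conjAlg e (R j)) = conjAlg e (polyEval p R) :=
      polyEval_map_alg p (conjAlg e) R
    have h2 : polyEval p (fun j => Matrix.toEuclideanCLM (𝕜 := ℂ) (Mt j))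
        = Matrix.toEuclideanCLM (𝕜 := ℂ) (polyEval p Mt) :=
      polyEval_map p (Matrix.toEuclideanCLM (𝕜 := ℂ)) Mt
    have h3 : (fun j => Matrix.toEuclideanCLM (𝕜 := ℂ) (Mt j))
        = fun j => conjAlg e (R j) := funext fun j => hMt j
    rw [← conjAlg_norm e, ← h1, ← h3, h2, ← matOpNorm_eq]
    exact hMle
  -- intertwining
  have hinter : ∀ w : Wsp, ((polyEval p R w : Wsp) : GG N H) = polyEval p S (w : GG N H) := by
    intro w
    rw [polyEval_eq_PP p R, polyEval_eq_PP p S]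
    rw [ContinuousLinearMap.sum_apply, ContinuousLinearMap.sum_apply]
    rw [Submodule.coe_sum]
    apply Finset.sum_congr rfl
    intro α _
    rw [ContinuousLinearMap.smul_apply, ContinuousLinearMap.smul_apply, SetLike.val_smul]
    congr 1
    exact PP_intertwine Wsp.subtype R S hcR hcS (fun j v => hR j v) (⇑α) w
  -- computation of p(S) applied to f 0
  have key1 : polyEval p S (f 0) = ∑ α ∈ p.support, p.coeff α • f ⇑α := by
    rw [polyEval_eq_PP p S, ContinuousLinearMap.sum_apply]
    apply Finset.sum_congr rfl
    intro α _
    rw [ContinuousLinearMap.smul_apply]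
    congr 1
    rw [PP_apply_shift S hcS f hshift (⇑α) 0, zero_add]
  have key2 : (windL N L 0 (polyEval p T x) : GG N H)
      = ∑ α ∈ p.support, p.coeff α • windL N L 0 (PP T ⇑α x) := by
    have h1 : polyEval p T x = ∑ α ∈ p.support, p.coeff α • PP T ⇑α x := by
      rw [polyEval_eq_PP p T, ContinuousLinearMap.sum_apply]
      apply Finset.sum_congr rfl
      intro α _
      rw [ContinuousLinearMap.smul_apply]
    rw [h1, map_sum]
    apply Finset.sum_congr rfl
    intro α _
    rw [map_smul]
  have hαD : ∀ α ∈ p.support, (∑ i, (⇑α : Fin d → ℕ) i) ≤ D := by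
    intro α hα
    have h1 : α.sum (fun _ e => e) = ∑ i, α i :=
      Finsupp.sum_fintype α (fun _ e => e) (fun _ => rfl)
    rw [← h1, hD]
    exact MvPolynomial.le_totalDegree hα
  have hdiff : ‖polyEval p S (f 0) - windL N L 0 (polyEval p T x)‖
      ≤ (∑ α ∈ p.support, ‖p.coeff α‖) * (Real.sqrt (2 * (D : ℝ)) * ‖x‖) := by
    rw [key1, key2, ← Finset.sum_sub_distrib]
    refine (norm_sum_le _ _).trans ?_
    rw [Finset.sum_mul]
    apply Finset.sum_le_sum
    intro α hα
    rw [← smul_sub, norm_smul]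
    have hw : ‖f ⇑α - windL N L 0 (PP T ⇑α x)‖ ≤ Real.sqrt (2 * (D : ℝ)) * ‖x‖ := by
      have h1 : f ⇑α = windL N L (∑ i, (⇑α : Fin d → ℕ) i) (PP T ⇑α x) := rfl
      rw [h1]
      refine (windL_diff_norm _ _).trans ?_
      have ha := hαD α hα
      have h2 : Real.sqrt (2 * (((∑ i, (⇑α : Fin d → ℕ) i) : ℕ) : ℝ))
          ≤ Real.sqrt (2 * (D : ℝ)) := by
        apply Real.sqrt_le_sqrt
        have h4 : (((∑ i, (⇑α : Fin d → ℕ) i) : ℕ) : ℝ) ≤ (D : ℝ) := by exact_mod_cast ha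
        linarith
      exact mul_le_mul h2 (PP_apply_norm_le hT _ _) (norm_nonneg _) (Real.sqrt_nonneg _)
    exact mul_le_mul_of_nonneg_left hw (norm_nonneg _)
  -- norm of f 0
  have hf0 : ‖f (0 : Fin d → ℕ)‖ = Real.sqrt L * ‖x‖ := by
    have h1 : f (0 : Fin d → ℕ) = windL N L 0 x := by
      have h2 : (∑ i, (0 : Fin d → ℕ) i) = 0 := by simp
      rw [show f (0 : Fin d → ℕ)
          = windL N L (∑ i, (0 : Fin d → ℕ) i) (PP T (0 : Fin d → ℕ) x) from rfl,
        h2, PP_zero, ContinuousLinearMap.one_apply]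
    rw [h1, windL_norm 0 hLN]
  have hPS : ‖polyEval p S (f 0)‖ ≤ Real.sqrt L * ‖x‖ := by
    have h1 := hinter ⟨f 0, bmem 0⟩
    have h2 : ((⟨f 0, bmem 0⟩ : Wsp) : GG N H) = f 0 := rfl
    rw [h2] at h1
    rw [← h1]
    have h3 : ‖((polyEval p R ⟨f 0, bmem 0⟩ : Wsp) : GG N H)‖
        = ‖polyEval p R ⟨f 0, bmem 0⟩‖ := rfl
    rw [h3]
    calc ‖polyEval p R ⟨f 0, bmem 0⟩‖
        ≤ ‖polyEval p R‖ * ‖(⟨f 0, bmem 0⟩ : Wsp)‖ := ContinuousLinearMap.le_opNorm _ _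
    _ ≤ 1 * ‖(⟨f 0, bmem 0⟩ : Wsp)‖ :=
        mul_le_mul_of_nonneg_right hRle (norm_nonneg _)
    _ = ‖f (0 : Fin d → ℕ)‖ := by
        rw [one_mul]
        rfl
    _ = Real.sqrt L * ‖x‖ := hf0
  -- final estimate
  calc Real.sqrt L * ‖polyEval p T x‖
      = ‖(windL N L 0 (polyEval p T x) : GG N H)‖ := (windL_norm 0 hLN _).symm
  _ = ‖polyEval p S (f 0) - (polyEval p S (f 0) - windL N L 0 (polyEval p T x))‖ := by
      congr 1
      abel
  _ ≤ ‖polyEval p S (f 0)‖ + ‖polyEval p S (f 0) - windL N L 0 (polyEval p T x)‖ :=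
      norm_sub_le _ _
  _ ≤ Real.sqrt L * ‖x‖ +
      (∑ α ∈ p.support, ‖p.coeff α‖) * (Real.sqrt (2 * (D : ℝ)) * ‖x‖) :=
      add_le_add hPS hdiff

end ShiftWind

theorem stmt14.{u} (d : ℕ) (p : MvPolynomial (Fin d) ℂ) :
    (∀ (H : Type u) [NormedAddCommGroup H] [InnerProductSpace ℂ H] [CompleteSpace H]
        (T : Fin d → H →L[ℂ] H),
        (∀ i j, Commute (T i) (T j)) → (∀ j, ‖T j‖ ≤ 1) → ‖polyEval p T‖ ≤ 1)
    ↔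
    (∀ (K n : ℕ) (T : Fin d → Matrix (Fin n) (Fin n) ℂ),
        IsSimpleNilTuple d K n T → (∀ j, matOpNorm (T j) ≤ 1) →
        matOpNorm (polyEval p T) ≤ 1) := by
  constructor
  · -- forward direction: matrices are operators on Euclidean space
    intro hvN K n T hNil hnorm
    have hcomm : ∀ i j, Commute (T i) (T j) := hNil.1
    set A : Fin d → (EuclideanSpace ℂ (Fin n) →L[ℂ] EuclideanSpace ℂ (Fin n)) :=
      fun j => Matrix.toEuclideanCLM (𝕜 := ℂ) (T j) with hA
    rw [matOpNorm_eq, ← polyEval_map p (Matrix.toEuclideanCLM (𝕜 := ℂ)) T]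
    let e : EuclideanSpace ℂ (ULift.{u} (Fin n)) ≃ₗᵢ[ℂ] EuclideanSpace ℂ (Fin n) :=
      LinearIsometryEquiv.piLpCongrLeft 2 ℂ ℂ Equiv.ulift
    have key := hvN (EuclideanSpace ℂ (ULift.{u} (Fin n)))
      (fun j => conjAlg e.symm (A j))
      (fun i j => ((hcomm i j).map (Matrix.toEuclideanCLM (𝕜 := ℂ))).map (conjAlg e.symm))
      (fun j => by rw [conjAlg_norm]; rw [hA]; rw [← matOpNorm_eq]; exact hnorm j)
    rw [polyEval_map_alg p (conjAlg e.symm) A, conjAlg_norm] at key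
    exact key
  · -- backward direction
    intro hM H _ _ _ T hcomm hT
    refine le_of_forall_gt_imp_ge_of_dense fun c hc => ?_
    set ε := c - 1 with hε
    have hεpos : 0 < ε := by rw [hε]; exact sub_pos.2 hc
    set C := ∑ α ∈ p.support, ‖p.coeff α‖ with hC
    have hC0 : 0 ≤ C := Finset.sum_nonneg fun _ _ => norm_nonneg _
    set B := C * Real.sqrt (2 * (p.totalDegree : ℝ)) with hB
    have hB0 : 0 ≤ B := mul_nonneg hC0 (Real.sqrt_nonneg _)
    obtain ⟨L, hL1, hL2⟩ : ∃ L : ℕ, 1 ≤ L ∧ B ≤ ε * Real.sqrt L := by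
      refine ⟨max 1 ⌈(B / ε) ^ 2⌉₊, le_max_left _ _, ?_⟩
      have h1 : ((B / ε) ^ 2 : ℝ) ≤ ((max 1 ⌈(B / ε) ^ 2⌉₊ : ℕ) : ℝ) := by
        calc ((B / ε) ^ 2 : ℝ) ≤ ((⌈(B / ε) ^ 2⌉₊ : ℕ) : ℝ) := Nat.le_ceil _
        _ ≤ _ := by exact_mod_cast Nat.le_max_right 1 _
      have h2 : B / ε ≤ Real.sqrt ((max 1 ⌈(B / ε) ^ 2⌉₊ : ℕ) : ℝ) :=
        (Real.le_sqrt (by positivity) (by positivity)).2 h1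
      calc B = ε * (B / ε) := by field_simp
      _ ≤ ε * Real.sqrt _ := mul_le_mul_of_nonneg_left h2 hεpos.le
    refine ContinuousLinearMap.opNorm_le_bound _ (by linarith) fun x => ?_
    have est := backward_main p hM T hcomm hT L hL1 x
    have hsL : (1 : ℝ) ≤ Real.sqrt L := by
      rw [show (1 : ℝ) = Real.sqrt 1 by simp]
      exact Real.sqrt_le_sqrt (by exact_mod_cast hL1)
    have hkey : Real.sqrt L * ‖polyEval p T x‖ ≤ Real.sqrt L * (c * ‖x‖) := by
      calc Real.sqrt L * ‖polyEval p T x‖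
          ≤ Real.sqrt L * ‖x‖ + C * (Real.sqrt (2 * (p.totalDegree : ℝ)) * ‖x‖) := est
      _ = Real.sqrt L * ‖x‖ + B * ‖x‖ := by rw [hB]; ring
      _ ≤ Real.sqrt L * ‖x‖ + (ε * Real.sqrt L) * ‖x‖ := by
          have h3 := mul_le_mul_of_nonneg_right hL2 (norm_nonneg x)
          linarith
      _ = Real.sqrt L * (c * ‖x‖) := by rw [hε]; ring
    exact le_of_mul_le_mul_left hkey (lt_of_lt_of_le one_pos hsL)
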